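/- arXiv:1502.05351 — 9 statements merged into one kernel-verified Lean document; each statement's English description precedes it below -/
import Mathlib

section
/- There exists a premetric space (X,d) with four points in which the interior (with respect to the generated topology τ_d) of the ball B_2(a) of radius 2 about some point a does not contain a. -/
open scoped NNReal

/-- ε-δ continuity between premetric spaces. -/
def IsEDContinuous {X Y : Type*} (d : X → X → ℝ≥0) (m : Y → Y → ℝ≥0) (f : X → Y) : Prop :=
  ∀ x : X, ∀ ε : ℝ≥0, 0 < ε → ∃ δ : ℝ≥0, 0 < δ ∧ ∀ x', d x x' < δ → m (f x) (f x') < ε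

/-- Topology generated by a premetric. -/
def premetricTopology {X : Type*} (d : X → X → ℝ≥0) : TopologicalSpace X where
  IsOpen U := ∀ x ∈ U, ∃ ε : ℝ≥0, 0 < ε ∧ ∀ y, d x y < ε → y ∈ U
  isOpen_univ := fun _ _ => ⟨1, one_pos, fun _ _ => trivial⟩
  isOpen_inter := by
    rintro s t hs ht x ⟨hxs, hxt⟩
    obtain ⟨ε₁, hε₁, h₁⟩ := hs x hxs
    obtain ⟨ε₂, hε₂, h₂⟩ := ht x hxt
    exact ⟨min ε₁ ε₂, lt_min hε₁ hε₂, fun y hy =>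
      ⟨h₁ y (hy.trans_le (min_le_left _ _)), h₂ y (hy.trans_le (min_le_right _ _))⟩⟩
  isOpen_sUnion := by
    rintro S hS x ⟨s, hsS, hxs⟩
    obtain ⟨ε, hε, h⟩ := hS s hsS x hxs
    exact ⟨ε, hε, fun y hy => ⟨s, hsS, h y hy⟩⟩

/-!
Points at distance zero cannot be separated by a premetric-open set, since every ball of positive
radius about a point contains all points at distance zero from it. Hence the interior of any set is
closed under steps of distance zero. In the example `a ⇝ b ⇝ c` are two such steps, so `c` would
lie in the interior of `B₂(a)` together with `a`; but `d(a, c) = 2`.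
-/

theorem premetricTopology_mem_of_isOpen_of_eq_zero {X : Type*} {d : X → X → ℝ≥0} {U : Set X}
    (hU : @IsOpen X (premetricTopology d) U) {x y : X} (hx : x ∈ U) (hxy : d x y = 0) : y ∈ U := by
  obtain ⟨ε, hε, hball⟩ := hU x hx
  exact hball y (hxy ▸ hε)

theorem premetricTopology_mem_interior_of_eq_zero {X : Type*} {d : X → X → ℝ≥0} {s : Set X}
    {x y : X} (hx : x ∈ @interior X (premetricTopology d) s) (hxy : d x y = 0) :
    y ∈ @interior X (premetricTopology d) s :=
  premetricTopology_mem_of_isOpen_of_eq_zero (@isOpen_interior X (premetricTopology d) s) hx hxy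

/-- The example premetric with `a, b, c, e` encoded as `0, 1, 2, 3`. -/
def fourPointPremetric : Fin 4 → Fin 4 → ℝ≥0 :=
  ![![0, 0, 2, 1],
    ![0, 0, 0, 1],
    ![2, 0, 0, 1],
    ![1, 1, 1, 0]]

theorem fourPointPremetric_self (x : Fin 4) : fourPointPremetric x x = 0 := by
  fin_cases x <;> rfl

/-- a four-point premetric space where the interior of the ball of
radius 2 about a point `a` does not contain `a`. -/
theorem exists_premetric_ball_interior_not_mem :
    ∃ (d : Fin 4 → Fin 4 → ℝ≥0), (∀ x, d x x = 0) ∧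
      ∃ a : Fin 4, a ∉ @interior _ (premetricTopology d) {y | d a y < 2} := by
  refine ⟨fourPointPremetric, fourPointPremetric_self, 0, fun ha => ?_⟩
  have hb := premetricTopology_mem_interior_of_eq_zero ha (y := 1) rfl
  have hc := premetricTopology_mem_interior_of_eq_zero hb (y := 2) rfl
  have hc_ball : fourPointPremetric 0 2 < 2 :=
    @interior_subset _ (premetricTopology _) {y | fourPointPremetric 0 y < 2} 2 hc
  exact hc_ball.ne rfl
end

section
/- Let (Y,m) be a premetric space whose generated topology τ_m has unique sequential limits. Then every sequence that τ_m-converges to a point y also m-converges to y (i.e., m(y, x_n) → 0). -/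
/-!
If `x n → y` in `τ_m` but `m y (x n) ≥ ε` along a subsequence `z`, then the range of `z` is
`τ_m`-closed: a point `v` outside it has `m v (z k) > 0` for all `k` (a constant sequence has only
one limit), so if `inf_k m v (z k) = 0` then `0` is a cluster value of `m v ∘ z`, some further
subsequence `m`-converges, hence `τ_m`-converges, to `v`, and uniqueness of limits forces `v = y`,
contradicting `m y (z k) ≥ ε`. Its complement is then an open neighbourhood of `y` that `z`
never enters.
-/

open scoped NNReal

open Filter Set Topology

theorem Filter.frequently_lt_of_forall_exists_lt {α : Type*} [LinearOrder α] {f : ℕ → α} {a : α}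
    (hgt : ∀ k, a < f k) (h : ∀ b, a < b → ∃ k, f k < b) {b : α} (hb : a < b) :
    ∃ᶠ k in atTop, f k < b := by
  refine frequently_atTop.2 fun N => ?_
  induction N generalizing b with
  | zero =>
    obtain ⟨k, hk⟩ := h b hb
    exact ⟨k, k.zero_le, hk⟩
  | succ N ih =>
    obtain ⟨k, hkN, hk⟩ := ih (lt_min hb (hgt N))
    have hkN' : k ≠ N := by
      rintro rfl
      exact (hk.trans_le (min_le_right _ _)).false
    exact ⟨k, lt_of_le_of_ne hkN hkN'.symm, hk.trans_le (min_le_left _ _)⟩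

section Premetric

variable {Y : Type*} (m : Y → Y → ℝ≥0)

theorem tendsto_premetricTopology_of_tendsto {ι : Type*} {l : Filter ι} {u : ι → Y} {a : Y}
    (h : Tendsto (fun i => m a (u i)) l (𝓝 0)) :
    Tendsto u l (@nhds Y (premetricTopology m) a) := by
  let _ := premetricTopology m
  refine tendsto_nhds.2 fun U hU haU => ?_
  obtain ⟨ε, hε, hball⟩ := hU a haU
  exact (nhds_bot_basis.tendsto_right_iff.1 h ε hε).mono fun i hi => hball _ hi

def UniqueSeqLimits : Prop :=
  ∀ (x : ℕ → Y) (a b : Y),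
    Tendsto x atTop (@nhds Y (premetricTopology m) a) →
    Tendsto x atTop (@nhds Y (premetricTopology m) b) → a = b

namespace UniqueSeqLimits

variable {m}

theorem eq_of_eq_zero (huniq : UniqueSeqLimits m) {a b : Y} (h : m a b = 0) : a = b := by
  let _ := premetricTopology m
  exact huniq (fun _ => b) a b (tendsto_premetricTopology_of_tendsto m (by simp [h]))
    tendsto_const_nhds

theorem eq_of_mapClusterPt (huniq : UniqueSeqLimits m) {z : ℕ → Y} {y w : Y}
    (hz : Tendsto z atTop (@nhds Y (premetricTopology m) y))
    (hw : MapClusterPt 0 atTop fun k => m w (z k)) : w = y := by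
  obtain ⟨ψ, hψ, hψw⟩ := hw.tendsto_subseq
  exact huniq (z ∘ ψ) w y (tendsto_premetricTopology_of_tendsto m hψw)
    (hz.comp hψ.tendsto_atTop)

theorem isOpen_compl_range (huniq : UniqueSeqLimits m) {z : ℕ → Y} {y : Y} {ε : ℝ≥0}
    (hz : Tendsto z atTop (@nhds Y (premetricTopology m) y)) (hε : 0 < ε)
    (hfar : ∀ k, ε ≤ m y (z k)) : IsOpen[premetricTopology m] (range z)ᶜ := by
  intro v hv
  have hpos : ∀ k, 0 < m v (z k) := fun k =>
    pos_iff_ne_zero.2 fun h => hv ⟨k, (huniq.eq_of_eq_zero h).symm⟩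
  obtain ⟨δ, hδ, hδfar⟩ : ∃ δ > 0, ∀ k, δ ≤ m v (z k) := by
    by_contra! hnear
    have hvy : v = y := huniq.eq_of_mapClusterPt hz <|
      nhds_bot_basis.mapClusterPt_iff_frequently.2 fun _ hδ =>
        frequently_lt_of_forall_exists_lt hpos hnear hδ
    obtain ⟨k, hk⟩ := hnear ε hε
    exact (hfar k).not_gt (hvy ▸ hk)
  refine ⟨δ, hδ, ?_⟩
  rintro u hu ⟨k, rfl⟩
  exact (hδfar k).not_gt hu

theorem not_tendsto_of_forall_le (huniq : UniqueSeqLimits m) (hm : ∀ y, m y y = 0)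
    {z : ℕ → Y} {y : Y} {ε : ℝ≥0} (hε : 0 < ε) (hfar : ∀ k, ε ≤ m y (z k)) :
    ¬Tendsto z atTop (@nhds Y (premetricTopology m) y) := by
  let _ := premetricTopology m
  intro hz
  have hy : y ∈ (range z)ᶜ := by
    rintro ⟨k, rfl⟩
    exact (hfar k).not_gt (by rwa [hm])
  obtain ⟨k, hk⟩ := (hz.eventually ((huniq.isOpen_compl_range hz hε hfar).mem_nhds hy)).exists
  exact hk ⟨k, rfl⟩

end UniqueSeqLimits

end Premetric

/-- if `τ_m` has unique sequential limits then topological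
convergence implies `m`-convergence. -/
theorem tendsto_implies_mconv_of_unique_limits {Y : Type*}
    (m : Y → Y → ℝ≥0) (hm : ∀ y, m y y = 0)
    (huniq : ∀ (x : ℕ → Y) (a b : Y),
      Filter.Tendsto x Filter.atTop (@nhds Y (premetricTopology m) a) →
      Filter.Tendsto x Filter.atTop (@nhds Y (premetricTopology m) b) → a = b) :
    ∀ (x : ℕ → Y) (y : Y),
      Filter.Tendsto x Filter.atTop (@nhds Y (premetricTopology m) y) →
      ∀ ε : ℝ≥0, 0 < ε → ∃ N, ∀ n ≥ N, m y (x n) < ε := by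
  intro x y hx ε hε
  by_contra! hfreq
  obtain ⟨φ, hφ, hfar⟩ := extraction_of_frequently_atTop (frequently_atTop.2 hfreq)
  exact UniqueSeqLimits.not_tendsto_of_forall_le huniq hm hε hfar (hx.comp hφ.tendsto_atTop)
end

section
/- Every first countable topological space is premetrisable: there exists a premetric d on X whose generated topology τ_d equals the original topology. -/
open scoped NNReal

/-!
Choose an antitone countable neighbourhood basis `b x 0 ⊇ b x 1 ⊇ ⋯` at every point `x` and let
`d x y = (1/2)^n` for the first `n` with `y ∉ b x n` (and `d x y = 0` if there is none). Then the
ball `{y | d x y < (1/2)^n}` is exactly `b x n`, so the balls around `x` form a basis of `𝓝 x`,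
which is all it takes for `d` to generate the topology.
-/

open Filter Topology

theorem premetricTopology_eq_of_hasBasis {X : Type*} [t : TopologicalSpace X] {d : X → X → ℝ≥0}
    (h : ∀ x, (𝓝 x).HasBasis (fun ε : ℝ≥0 => 0 < ε) fun ε => {y | d x y < ε}) :
    premetricTopology d = t := by
  ext U
  rw [@isOpen_iff_mem_nhds X t U]
  exact forall₂_congr fun x _ => ((h x).mem_iff).symm

section exitDist

variable {X : Type*} {s : ℕ → Set X} {y : X}

open Classical in
noncomputable def exitDist (s : ℕ → Set X) (y : X) : ℝ≥0 :=
  if h : ∃ n, y ∉ s n then (1 / 2) ^ Nat.find h else 0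

theorem exitDist_eq_zero (h : ∀ n, y ∈ s n) : exitDist s y = 0 :=
  dif_neg fun ⟨n, hn⟩ => hn (h n)

open Classical in
theorem exitDist_lt_half_pow_iff (hs : Antitone s) (n : ℕ) :
    exitDist s y < (1 / 2) ^ n ↔ y ∈ s n := by
  unfold exitDist
  split_ifs with h
  · rw [pow_lt_pow_iff_right_of_lt_one₀ (by norm_num) (by norm_num), Nat.lt_find_iff]
    simp only [not_not]
    exact ⟨fun hle => hle n le_rfl, fun hy m hm => hs hm hy⟩
  · push Not at h
    simp [h n]

theorem Filter.HasAntitoneBasis.hasBasis_exitDist_lt {l : Filter X}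
    (hs : l.HasAntitoneBasis s) :
    l.HasBasis (fun ε : ℝ≥0 => 0 < ε) fun ε => {y | exitDist s y < ε} := by
  have ball_eq (n : ℕ) : {y | exitDist s y < (1 / 2) ^ n} = s n :=
    Set.ext fun _ => exitDist_lt_half_pow_iff hs.antitone n
  refine hs.toHasBasis.to_hasBasis (fun n _ => ⟨(1 / 2) ^ n, by positivity, (ball_eq n).le⟩)
    fun ε hε => ?_
  obtain ⟨n, hn⟩ := NNReal.exists_pow_lt_of_lt_one hε (by norm_num : (1 / 2 : ℝ≥0) < 1)
  exact ⟨n, trivial, fun y hy => ((exitDist_lt_half_pow_iff hs.antitone n).2 hy).trans hn⟩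

end exitDist

/-- every first countable space is premetrisable. -/
theorem firstCountable_premetrisable {X : Type*} [t : TopologicalSpace X]
    [FirstCountableTopology X] :
    ∃ d : X → X → ℝ≥0, (∀ x, d x x = 0) ∧ premetricTopology d = t := by
  choose b hb using fun x : X => (𝓝 x).exists_antitone_basis
  refine ⟨fun x => exitDist (b x), fun x => exitDist_eq_zero fun n => ?_,
    premetricTopology_eq_of_hasBasis fun x => (hb x).hasBasis_exitDist_lt⟩
  exact mem_of_mem_nhds ((hb x).mem n)
end

section
/- The Fréchet fan (the quotient of the disjoint sum of countably many convergent sequences ω+1 identifying all limit points to one point ∞) is not premetrisable. -/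
open scoped NNReal

open OnePoint in
/-- The Fréchet fan: countably many convergent sequences with all limit
points identified. -/
def fanSetoid : Setoid (Σ _ : ℕ, OnePoint ℕ) where
  r p q := p = q ∨ (p.2 = ∞ ∧ q.2 = ∞)
  iseqv := by
    constructor
    · exact fun _ => Or.inl rfl
    · rintro p q (rfl | ⟨h1, h2⟩)
      · exact Or.inl rfl
      · exact Or.inr ⟨h2, h1⟩
    · rintro p q r (rfl | ⟨h1, h2⟩) h
      · exact h
      · rcases h with rfl | ⟨h3, h4⟩
        · exact Or.inr ⟨h1, h2⟩
        · exact Or.inr ⟨h1, h4⟩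

/-- The Fréchet fan as a quotient (with the quotient topology). -/
def FrechetFan : Type := Quotient fanSetoid

instance : TopologicalSpace FrechetFan := instTopologicalSpaceQuotient

/-! Every point of the fan except the apex `∞` is isolated, so if a premetric `d` generates the
topology, `∞` lies in the closure of a set `A` exactly when `d ∞ a` gets arbitrarily small on `A`.
Since the `n`-th spine converges to `∞`, it contains a point `pₙ` with `d ∞ pₙ < 1 / (n + 1)`.
Then `∞` is in the closure of `{pₙ | n}`; but this set meets every spine in a single point of the
sequence, so it is closed, and it does not contain `∞`. -/

open Set Filter Topology OnePoint

section Premetric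

variable {X : Type*} {d : X → X → ℝ≥0} {x : X} {A : Set X}

theorem mem_closure_premetricTopology_of_forall_exists_lt
    (h : ∀ ε : ℝ≥0, 0 < ε → ∃ a ∈ A, d x a < ε) : x ∈ closure[premetricTopology d] A := by
  rw [@mem_closure_iff _ (premetricTopology d)]
  intro U hU hxU
  obtain ⟨ε, hε, hball⟩ := hU x hxU
  obtain ⟨a, haA, hxa⟩ := h ε hε
  exact ⟨a, hball a hxa, haA⟩

/-- If the `ε`-ball about `x` missed `A`, then `Aᶜ` would be open, the other points being isolated. -/
theorem exists_lt_of_mem_closure_premetricTopology (hx : d x x = 0)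
    (hiso : ∀ y, y ≠ x → IsOpen[premetricTopology d] {y})
    (h : x ∈ closure[premetricTopology d] A) : ∀ ε : ℝ≥0, 0 < ε → ∃ a ∈ A, d x a < ε := by
  by_contra! hfar
  obtain ⟨ε, hε, hfar⟩ := hfar
  have hAc : IsOpen[premetricTopology d] Aᶜ := by
    intro y hy
    by_cases hyx : y = x
    · subst hyx
      exact ⟨ε, hε, fun z hz hzA => (hfar z hzA).not_gt hz⟩
    · obtain ⟨δ, hδ, hball⟩ := hiso y hyx y rfl
      exact ⟨δ, hδ, fun z hz => (hball z hz : z = y) ▸ hy⟩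
  have hxA : x ∈ Aᶜ := fun hxA => (hfar x hxA).not_gt (hx ▸ hε)
  obtain ⟨a, haAc, haA⟩ := (@mem_closure_iff _ (premetricTopology d) _ _).mp h Aᶜ hAc hxA
  exact haAc haA

end Premetric

namespace FrechetFan

def point (n : ℕ) (j : OnePoint ℕ) : FrechetFan := Quotient.mk fanSetoid ⟨n, j⟩

def apex : FrechetFan := point 0 ∞

theorem point_infty (n : ℕ) : point n ∞ = apex := Quotient.sound (Or.inr ⟨rfl, rfl⟩)

theorem point_eq_point_coe_iff {m n j : ℕ} {x : OnePoint ℕ} :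
    point m x = point n j ↔ m = n ∧ x = j := by
  refine ⟨fun h => ?_, by rintro ⟨rfl, rfl⟩; rfl⟩
  rcases Quotient.exact h with hsame | ⟨-, hinf⟩
  · obtain ⟨rfl, hx⟩ := Sigma.mk.inj_iff.mp hsame
    exact ⟨rfl, eq_of_heq hx⟩
  · exact absurd hinf (coe_ne_infty j)

theorem point_coe_ne_apex (n j : ℕ) : point n j ≠ apex := fun h =>
  infty_ne_coe j (point_eq_point_coe_iff.mp h.symm).2

theorem exists_eq_point (y : FrechetFan) : ∃ n x, point n x = y := by
  obtain ⟨⟨n, x⟩, rfl⟩ := Quotient.exists_rep y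
  exact ⟨n, x, rfl⟩

theorem continuous_point (n : ℕ) : Continuous (point n) :=
  continuous_quotient_mk'.comp continuous_sigmaMk

theorem isOpen_iff {U : Set FrechetFan} : IsOpen U ↔ ∀ n, IsOpen (point n ⁻¹' U) :=
  isOpen_coinduced.trans isOpen_sigma_iff

theorem isClosed_iff {F : Set FrechetFan} : IsClosed F ↔ ∀ n, IsClosed (point n ⁻¹' F) :=
  isClosed_coinduced.trans isClosed_sigma_iff

theorem isOpen_singleton_of_ne_apex {y : FrechetFan} (hy : y ≠ apex) : IsOpen {y} := by
  obtain ⟨n, x, rfl⟩ := exists_eq_point y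
  induction x using OnePoint.rec with
  | infty => exact absurd (point_infty n) hy
  | coe j =>
    refine isOpen_iff.mpr fun m => ?_
    by_cases hmn : m = n
    · subst hmn
      have hpre : point m ⁻¹' {point m j} = (↑) '' {j} := by
        ext x
        simp [point_eq_point_coe_iff]
      rw [hpre, isOpen_image_coe]
      exact isOpen_discrete _
    · have hpre : point m ⁻¹' {point n j} = ∅ := by
        ext x
        simp [point_eq_point_coe_iff, hmn]
      rw [hpre]
      exact isOpen_empty

theorem apex_mem_closure_range_point (n : ℕ) : apex ∈ closure (range fun j : ℕ => point n j) := by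
  have h : Tendsto (fun j : ℕ => point n j) (coclosedCompact ℕ) (𝓝 apex) :=
    point_infty n ▸ ((continuous_point n).tendsto ∞).comp tendsto_coe_infty
  exact mem_closure_of_tendsto h (Eventually.of_forall fun j => mem_range_self j)

theorem isClosed_range_point (k : ℕ → ℕ) : IsClosed (range fun n => point n (k n)) := by
  refine isClosed_iff.mpr fun m => ?_
  have hpre : point m ⁻¹' range (fun n => point n (k n)) = {(k m : OnePoint ℕ)} := by
    ext x
    simp only [mem_preimage, mem_range, mem_singleton_iff]
    constructor
    · rintro ⟨n, hn⟩
      obtain ⟨rfl, hx⟩ := point_eq_point_coe_iff.mp hn.symm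
      exact hx
    · rintro rfl
      exact ⟨m, rfl⟩
  rw [hpre]
  exact isClosed_singleton

end FrechetFan

open FrechetFan in
/-- the Fréchet fan is not premetrisable. -/
theorem frechetFan_not_premetrisable :
    ¬ ∃ d : FrechetFan → FrechetFan → ℝ≥0,
        (∀ x, d x x = 0) ∧ premetricTopology d = (inferInstance : TopologicalSpace FrechetFan) := by
  rintro ⟨d, hd0, htop⟩
  have hclosure_eq (A : Set FrechetFan) : closure[premetricTopology d] A = closure A := by
    rw [htop]
  have hiso : ∀ y, y ≠ apex → IsOpen[premetricTopology d] {y} := by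
    rw [htop]
    exact fun y => isOpen_singleton_of_ne_apex
  have hnear (n : ℕ) : ∃ k : ℕ, d apex (point n k) < 1 / (n + 1) := by
    obtain ⟨_, ⟨k, rfl⟩, hk⟩ := exists_lt_of_mem_closure_premetricTopology (hd0 apex) hiso
      ((hclosure_eq _).symm ▸ apex_mem_closure_range_point n) _ Nat.one_div_pos_of_nat
    exact ⟨k, hk⟩
  choose k hk using hnear
  have hclosure : apex ∈ closure (range fun n => point n (k n)) := by
    rw [← hclosure_eq]
    refine mem_closure_premetricTopology_of_forall_exists_lt fun ε hε => ?_
    obtain ⟨n, hn⟩ := exists_nat_one_div_lt hε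
    exact ⟨_, mem_range_self n, (hk n).trans hn⟩
  obtain ⟨n, hn⟩ := (isClosed_range_point k).closure_eq ▸ hclosure
  exact point_coe_ne_apex n (k n) hn
end

section
/- A complete lattice L is completely distributive if and only if every element y ∈ L satisfies y = ⋀{a ∈ L | a ≻ y}, where ≻ is the well-above relation. -/
/-!
Every `y` is the join of the meets `⨅ S` over all `S` with `⨅ S ≤ y`. If the lattice is completely
distributive, this join of meets is a meet of joins `⨆_S g S` over choice functions `g`, and each
such join is well above `y`, so `y` is the meet of the elements well above it. Conversely, an
element well above `⨆ i, ⨅ j, f i j` lies above some `f i (g i)` for every `i`, hence above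
`⨅ g, ⨆ i, f i (g i)`; so the meet-of-well-above property gives the dual distributive law, which is
equivalent to the law itself.
-/

universe u

/-- `wellAbove y x` means `y` is well above `x`: whenever `x ≥ ⨅ S` there is `s ∈ S` with `s ≤ y`. -/
def wellAbove {L : Type*} [CompleteLattice L] (y x : L) : Prop :=
  ∀ S : Set L, sInf S ≤ x → ∃ s ∈ S, s ≤ y

open Set

section CompleteLattice

variable {L : Type*} [CompleteLattice L]

theorem wellAbove.le {a y : L} (h : wellAbove a y) : y ≤ a := by
  obtain ⟨s, rfl, hs⟩ := h {y} (by simp)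
  exact hs

theorem le_sInf_setOf_wellAbove (y : L) : y ≤ sInf {a | wellAbove a y} :=
  le_sInf fun _ ha => ha.le

theorem iSup_iInf_eq_of_forall_eq_sInf_wellAbove (h : ∀ y : L, y = sInf {a | wellAbove a y})
    {ι : Sort*} {κ : ι → Sort*} (f : ∀ i, κ i → L) :
    ⨆ i, ⨅ j, f i j = ⨅ g : ∀ i, κ i, ⨆ i, f i (g i) := by
  refine le_antisymm iSup_iInf_le (le_trans ?_ (h _).ge)
  refine le_sInf fun a ha => ?_
  have hchoice : ∀ i, ∃ j, f i j ≤ a := fun i => by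
    obtain ⟨_, ⟨j, rfl⟩, hj⟩ := ha (range (f i)) (le_iSup_of_le i sInf_range.le)
    exact ⟨j, hj⟩
  choose g hg using hchoice
  exact iInf_le_of_le g (iSup_le hg)

end CompleteLattice

theorem sInf_setOf_wellAbove_le {L : Type*} [CompletelyDistribLattice L] (y : L) :
    sInf {a | wellAbove a y} ≤ y := by
  let ι := {S : Set L // sInf S ≤ y}
  have hwellAbove (g : ∀ S : ι, S.1) : wellAbove (⨆ S, (g S : L)) y := fun T hT =>
    ⟨g ⟨T, hT⟩, (g ⟨T, hT⟩).2, le_iSup (fun S => (g S : L)) ⟨T, hT⟩⟩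
  calc sInf {a | wellAbove a y} ≤ ⨅ g : ∀ S : ι, S.1, ⨆ S, (g S : L) :=
        le_iInf fun g => sInf_le (hwellAbove g)
    _ = ⨆ S : ι, ⨅ s : S.1, (s : L) := iSup_iInf_eq.symm
    _ ≤ y := iSup_le fun S => (sInf_eq_iInf' S.1).ge.trans S.2

/-- a complete lattice is completely distributive iff every
element is the meet of the elements well above it. -/
theorem completelyDistrib_iff_wellAbove {L : Type u} [CompleteLattice L] :
    (∀ {ι : Type u} {κ : ι → Type u} (f : ∀ i : ι, κ i → L),
        (⨅ i, ⨆ j, f i j) = ⨆ g : ∀ i, κ i, ⨅ i, f i (g i)) ↔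
      ∀ y : L, y = sInf {a : L | wellAbove a y} := by
  constructor
  · intro h y
    let : CompletelyDistribLattice L := .ofMinimalAxioms ⟨h⟩
    exact le_antisymm (le_sInf_setOf_wellAbove y) (sInf_setOf_wellAbove_le y)
  · intro h ι κ f
    let : CompletelyDistribLattice Lᵒᵈ :=
      .ofMinimalAxioms ⟨iSup_iInf_eq_of_forall_eq_sInf_wellAbove h⟩
    exact iSup_iInf_eq (α := Lᵒᵈ) (f := f)
end

section
/- For any set X, the collection Ω(X) of downwards-closed subsets of the finite powerset [X]^{<ω}, ordered by reverse inclusion, is a completely distributive lattice in which an element p is well above the bottom element if and only if p is finite; moreover the well-above-bottom elements form a filter, so Ω(X) is a value distributive lattice. -/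
/-- Downwards-closed families of finite subsets of `X`. -/
def Omega (X : Type*) : Type _ :=
  {A : Set (Finset X) // ∀ ⦃B C : Finset X⦄, B ⊆ C → C ∈ A → B ∈ A}

/-- The desired properties of `Ω(X)` with respect to a completely distributive
lattice structure on it: the order is reverse inclusion, the elements well
above the bottom are exactly the finite ones, and they form a filter. -/
def OmegaSpec (X : Type*) [CompletelyDistribLattice (Omega X)] : Prop :=
  (∀ p q : Omega X, p ≤ q ↔ q.1 ⊆ p.1) ∧
  (∀ p : Omega X, wellAbove p ⊥ ↔ p.1.Finite) ∧
  ((∃ a : Omega X, wellAbove a ⊥) ∧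
    (∀ a b : Omega X, wellAbove a ⊥ → a ≤ b → wellAbove b ⊥) ∧
    (∀ a b : Omega X, wellAbove a ⊥ → wellAbove b ⊥ → wellAbove (a ⊓ b) ⊥))

/-! `Ω(X)` is the order dual of the lattice of lower sets of `(Finset X, ⊆)`, hence completely
distributive. In the dual of a lattice of lower sets the bottom is the whole space, so a lower set
`s` is well above it iff every cover by lower sets has a member containing `s`. The principal lower
sets `Iic a` form such a cover, so `s` must be bounded above; conversely a bound `a` of `s` lies in
some member of any cover, which then contains `Iic a ⊇ s`. In `Finset X`, bounded above means
finite, and finite families are closed under union. -/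

open OrderDual

theorem wellAbove.mono {L : Type*} [CompleteLattice L] {y y' x : L} (h : wellAbove y x)
    (hy : y ≤ y') : wellAbove y' x := fun S hS =>
  let ⟨s, hs, hsy⟩ := h S hS
  ⟨s, hs, hsy.trans hy⟩

theorem wellAbove.map {L M : Type*} [CompleteLattice L] [CompleteLattice M] (e : L ≃o M)
    {y x : L} (h : wellAbove y x) : wellAbove (e y) (e x) := by
  intro S hS
  have hS' : sInf (e.symm '' S) ≤ x := by
    rw [← map_sInf, ← e.symm_apply_apply x]
    exact e.symm.monotone hS
  obtain ⟨_, ⟨t, ht, rfl⟩, hty⟩ := h _ hS'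
  exact ⟨t, ht, e.symm_apply_le.1 hty⟩

theorem OrderIso.wellAbove_apply_iff {L M : Type*} [CompleteLattice L] [CompleteLattice M]
    (e : L ≃o M) {y x : L} : wellAbove (e y) (e x) ↔ wellAbove y x :=
  ⟨fun h => by simpa using h.map e.symm, (·.map e)⟩

theorem LowerSet.wellAbove_toDual_bot_iff {α : Type*} [Preorder α] (s : LowerSet α) :
    wellAbove (toDual s) ⊥ ↔ BddAbove (s : Set α) := by
  constructor
  · intro h
    have hcover : sInf (Set.range fun a : α => toDual (LowerSet.Iic a)) ≤ ⊥ := by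
      rw [← ofDual_le_ofDual, ofDual_bot, ofDual_sInf, top_le_iff, ← SetLike.coe_set_eq]
      simp
    obtain ⟨_, ⟨a, rfl⟩, ha⟩ := h _ hcover
    exact ⟨a, fun b hb => ha hb⟩
  · rintro ⟨a, ha⟩ S hS
    rw [← ofDual_le_ofDual, ofDual_bot, ofDual_sInf, top_le_iff] at hS
    have hmem : a ∈ sSup (toDual ⁻¹' S) := hS ▸ LowerSet.mem_top
    obtain ⟨t, ht, hat⟩ := LowerSet.mem_sSup_iff.1 hmem
    exact ⟨toDual t, ht, (show s ≤ LowerSet.Iic a from fun b hb => ha hb).trans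
      (LowerSet.Iic_le.2 hat)⟩

namespace Omega

variable {X : Type*}

def equivLowerSet : Omega X ≃ (LowerSet (Finset X))ᵒᵈ where
  toFun p := toDual ⟨p.1, fun _ _ h hC => p.2 h hC⟩
  invFun s := ⟨((ofDual s : LowerSet (Finset X)) : Set (Finset X)),
    fun _ _ h hC => (ofDual s).lower h hC⟩
  left_inv _ := rfl
  right_inv _ := rfl

instance : CompletelyDistribLattice (Omega X) := equivLowerSet.completelyDistribLattice

theorem le_iff_subset {p q : Omega X} : p ≤ q ↔ q.1 ⊆ p.1 := Iff.rfl

theorem val_inf (p q : Omega X) : (p ⊓ q).1 = p.1 ∪ q.1 := rfl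

def orderIsoLowerSet : Omega X ≃o (LowerSet (Finset X))ᵒᵈ := ⟨equivLowerSet, Iff.rfl⟩

theorem wellAbove_bot_iff_bddAbove (p : Omega X) : wellAbove p ⊥ ↔ BddAbove p.1 := by
  rw [← orderIsoLowerSet.wellAbove_apply_iff, map_bot]
  exact LowerSet.wellAbove_toDual_bot_iff _

theorem wellAbove_bot_iff_finite (p : Omega X) : wellAbove p ⊥ ↔ p.1.Finite := by
  classical
  rw [wellAbove_bot_iff_bddAbove, Set.finite_iff_bddAbove]

end Omega

/-- `Ω(X)`, ordered by reverse inclusion, is a value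
distributive lattice whose well-above-bottom elements are the finite ones. -/
theorem omega_value_distributive (X : Type*) :
    ∃ inst : CompletelyDistribLattice (Omega X), @OmegaSpec X inst := by
  refine ⟨inferInstance, fun _ _ => Omega.le_iff_subset, Omega.wellAbove_bot_iff_finite,
    ⟨⊤, (Omega.wellAbove_bot_iff_finite ⊤).2 Set.finite_empty⟩, fun _ _ ha hab => ha.mono hab, ?_⟩
  intro a b ha hb
  rw [Omega.wellAbove_bot_iff_finite] at ha hb ⊢
  rw [Omega.val_inf]
  exact ha.union hb
end

section
/- For any topological space (X,τ), define d : X × X → Ω(τ) by d(x,y) = {F ∈ [τ]^{<ω} | ∀U ∈ F, x ∈ U ⇒ y ∈ U}. Then (X, Ω(τ), d) is a continuity space whose generated topology equals τ. -/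
theorem wellAbove_mono {L : Type*} [CompleteLattice L] {c c' z : L} (h : c ≤ c')
    (hw : wellAbove c z) : wellAbove c' z := fun S hS =>
  let ⟨s, hs, hsc⟩ := hw S hS
  ⟨s, hs, hsc.trans h⟩

/-- ε-δ continuity between generalised premetric (continuity) spaces. -/
def IsEDContinuousV {X Y V W : Type*} [CompleteLattice V] [CompleteLattice W]
    (d : X → X → V) (m : Y → Y → W) (f : X → Y) : Prop :=
  ∀ x : X, ∀ ε : W, wellAbove ε ⊥ →
    ∃ δ : V, wellAbove δ ⊥ ∧ ∀ x', wellAbove δ (d x' x) → wellAbove ε (m (f x') (f x))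

/-- The topology generated by a continuity space over a value distributive
lattice (the filter properties of the well-above-bottom elements are supplied
as hypotheses). -/
def csTopology {V X : Type*} [CompleteLattice V] (d : X → X → V)
    (hne : ∃ a : V, wellAbove a ⊥)
    (hmeet : ∀ a b : V, wellAbove a ⊥ → wellAbove b ⊥ → wellAbove (a ⊓ b) ⊥) :
    TopologicalSpace X where
  IsOpen U := ∀ x ∈ U, ∃ ε : V, wellAbove ε ⊥ ∧ ∀ y, wellAbove ε (d y x) → y ∈ U
  isOpen_univ := by
    obtain ⟨a, ha⟩ := hne
    exact fun _ _ => ⟨a, ha, fun _ _ => trivial⟩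
  isOpen_inter := by
    rintro s t hs ht x ⟨hxs, hxt⟩
    obtain ⟨ε₁, hε₁, h₁⟩ := hs x hxs
    obtain ⟨ε₂, hε₂, h₂⟩ := ht x hxt
    exact ⟨ε₁ ⊓ ε₂, hmeet _ _ hε₁ hε₂, fun y hy =>
      ⟨h₁ y (wellAbove_mono inf_le_left hy), h₂ y (wellAbove_mono inf_le_right hy)⟩⟩
  isOpen_sUnion := by
    rintro S hS x ⟨s, hsS, hxs⟩
    obtain ⟨ε, hε, h⟩ := hS s hsS x hxs
    exact ⟨ε, hε, fun y hy => ⟨s, hsS, h y hy⟩⟩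

/-- The dual of the lattice of lower sets of finite subsets of `α`:
downwards-closed families ordered by reverse inclusion. -/
abbrev OmegaD (α : Type*) := (LowerSet (Finset α))ᵒᵈ

/-- Flagg's distance on a topological space. -/
def flaggDist (X : Type*) [TopologicalSpace X] (x y : X) : OmegaD (TopologicalSpace.Opens X) :=
  OrderDual.toDual
    ⟨{F : Finset (TopologicalSpace.Opens X) | ∀ U ∈ F, x ∈ U → y ∈ U},
      fun F F' hle hF U hU hx => hF U (hle hU) hx⟩


lemma le_of_wellAbove {L : Type*} [CompleteLattice L] {y x : L} (h : wellAbove y x) : x ≤ y := by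
  obtain ⟨s, hs, h'⟩ := h {x} (by simp)
  rw [Set.mem_singleton_iff] at hs
  subst hs; exact h'

lemma wellAbove_toDual_iff {α : Type*} (ε z : LowerSet (Finset α)) :
    wellAbove (OrderDual.toDual ε) (OrderDual.toDual z) ↔
      ∃ F ∈ z, ε ≤ lowerClosure {F} := by
  constructor
  · intro h
    obtain ⟨s, ⟨F, hF, rfl⟩, hs⟩ := h
      ((fun F => OrderDual.toDual (lowerClosure ({F} : Set (Finset α)))) '' {F | F ∈ z})
      (by
        rw [← OrderDual.ofDual_le_ofDual, ofDual_sInf]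
        intro G hG
        rw [LowerSet.coe_sSup, Set.mem_iUnion₂]
        exact ⟨lowerClosure {G}, ⟨G, hG, rfl⟩, subset_lowerClosure rfl⟩)
    exact ⟨F, hF, hs⟩
  · rintro ⟨F, hF, hε⟩ S hS
    rw [← OrderDual.ofDual_le_ofDual, ofDual_sInf] at hS
    have h2 := hS hF
    rw [LowerSet.coe_sSup, Set.mem_iUnion₂] at h2
    obtain ⟨t, hts, hFt⟩ := h2
    refine ⟨OrderDual.toDual t, hts, ?_⟩
    rw [← OrderDual.ofDual_le_ofDual]
    refine hε.trans fun G hG => ?_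
    obtain ⟨F', hF', hle⟩ := hG
    rw [Set.mem_singleton_iff] at hF'
    subst hF'
    exact t.lower hle hFt

open TopologicalSpace in
/-- Flagg's construction: `(X, Omega(tau), d)` is a continuity space
whose generated topology equals `tau`. -/
theorem flagg_generates_topology (X : Type*) [TopologicalSpace X] :
    (∀ x : X, flaggDist X x x = ⊥) ∧
    ∀ U : Set X, IsOpen U ↔
      ∀ x ∈ U, ∃ ε : OmegaD (Opens X), wellAbove ε ⊥ ∧
        ∀ y, wellAbove ε (flaggDist X x y) → y ∈ U := by

  constructor
  · intro x
    rw [eq_bot_iff, ← OrderDual.ofDual_le_ofDual]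
    intro F _
    exact fun U hU h => h
  · intro U
    constructor
    · intro hU x hx
      refine ⟨OrderDual.toDual (lowerClosure {({⟨U, hU⟩} : Finset (Opens X))}), ?_, ?_⟩
      · exact (wellAbove_toDual_iff _ ⊤).mpr ⟨_, trivial, le_rfl⟩
      · intro y hy
        have hle := le_of_wellAbove hy
        have h2 := OrderDual.ofDual_le_ofDual.mpr hle
        have h3 : ({⟨U, hU⟩} : Finset (Opens X)) ∈
            OrderDual.ofDual (flaggDist X x y) := h2 (subset_lowerClosure rfl)
        exact h3 ⟨U, hU⟩ (Finset.mem_singleton_self _) hx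
    · intro h
      rw [isOpen_iff_forall_mem_open]
      intro x hx
      obtain ⟨ε, hεwa, hball⟩ := h x hx
      obtain ⟨F, -, hεF⟩ := (wellAbove_toDual_iff (OrderDual.ofDual ε) ⊤).mp hεwa
      classical
      refine ⟨⋂ V ∈ F, if x ∈ V then (V : Set X) else Set.univ, ?_, ?_, ?_⟩
      · intro y hy
        apply hball
        refine (wellAbove_toDual_iff (OrderDual.ofDual ε)
          (OrderDual.ofDual (flaggDist X x y))).mpr ⟨F, ?_, hεF⟩
        intro V hV hxV
        have := Set.mem_iInter₂.mp hy V hV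
        rwa [if_pos hxV] at this
      · exact isOpen_biInter_finset fun V _ => by
          split_ifs
          · exact V.isOpen
          · exact isOpen_univ
      · refine Set.mem_iInter₂.mpr fun V hV => ?_
        split_ifs with hxV
        · exact hxV
        · trivial
end

section
/- In the continuity space (X, Ω(τ), d) constructed from a topological space (X,τ) with d(x,y) = {F ∈ [τ]^{<ω} | ∀U ∈ F, x ∈ U ⇒ y ∈ U}, every ε-ball B_ε(x) with ε ≻ 0 is open in τ; in fact for U ∈ τ containing x and ε = {∅, {U}}, B_ε(x) ⊆ U. -/
lemma wellAbove_aux {α : Type*} [Preorder α] (S : Set (LowerSet α)ᵒᵈ) (F : α)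
    (h : F ∈ (OrderDual.ofDual (sInf S) : LowerSet α)) : ∃ s ∈ S, F ∈ OrderDual.ofDual s := by
  rw [ofDual_sInf, LowerSet.mem_sSup_iff] at h
  obtain ⟨t, ht, hF⟩ := h
  exact ⟨OrderDual.toDual t, ht, hF⟩

lemma wellAbove_aux2 {α : Type*} [Preorder α] (S : Set (LowerSet α)ᵒᵈ) (z : (LowerSet α)ᵒᵈ)
    (h : ∀ F ∈ (OrderDual.ofDual z : LowerSet α), ∃ s ∈ S, F ∈ OrderDual.ofDual s) :
    sInf S ≤ z := by
  show OrderDual.ofDual z ≤ OrderDual.ofDual (sInf S)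
  rw [ofDual_sInf]
  intro F hF
  obtain ⟨s, hs, hFs⟩ := h F hF
  exact LowerSet.mem_sSup_iff.2 ⟨OrderDual.ofDual s, by simpa using hs, hFs⟩

/-- Characterisation of `wellAbove` in `OmegaD`. -/
lemma wellAbove_omegaD_iff {α : Type*} (ε z : OmegaD α) :
    wellAbove ε z ↔ ∃ F ∈ (OrderDual.ofDual z : LowerSet (Finset α)),
      ∀ G ∈ (OrderDual.ofDual ε : LowerSet (Finset α)), G ⊆ F := by
  constructor
  · intro h
    obtain ⟨s, hs, hse⟩ := h
      ((fun F => OrderDual.toDual (LowerSet.Iic F)) ''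
        {F | F ∈ (OrderDual.ofDual z : LowerSet (Finset α))})
      (wellAbove_aux2 _ _ fun F hF =>
        ⟨OrderDual.toDual (LowerSet.Iic F), Set.mem_image_of_mem _ hF,
          LowerSet.mem_Iic_iff.2 le_rfl⟩)
    obtain ⟨F, hFz, rfl⟩ := hs
    refine ⟨F, hFz, fun G hG => ?_⟩
    have : G ∈ LowerSet.Iic F := hse hG
    exact LowerSet.mem_Iic_iff.1 this
  · rintro ⟨F, hFz, hF⟩ S hS
    obtain ⟨s, hsS, hFs⟩ := wellAbove_aux S F (hS hFz)
    refine ⟨s, hsS, fun G hG => ?_⟩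
    exact (OrderDual.ofDual s).lower (hF G hG) hFs

lemma mem_flaggDist {X : Type*} [TopologicalSpace X] {x y : X}
    {F : Finset (TopologicalSpace.Opens X)} :
    F ∈ (OrderDual.ofDual (flaggDist X x y) : LowerSet (Finset (TopologicalSpace.Opens X))) ↔
      ∀ U ∈ F, x ∈ U → y ∈ U := Iff.rfl

open TopologicalSpace in
/-- in the Flagg continuity space, every ball with radius well
above bottom is open; and for open `U` containing `x`, taking the radius
`{∅,{U}}`, the corresponding ball is contained in `U`. -/
theorem flagg_balls_open (X : Type*) [TopologicalSpace X] :
    (∀ (x : X) (ε : OmegaD (Opens X)), wellAbove ε ⊥ →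
      IsOpen {y | wellAbove ε (flaggDist X x y)}) ∧
    ∀ (U : Set X) (hU : IsOpen U), ∀ x ∈ U,
      ∀ y, wellAbove
          (OrderDual.toDual
            (⟨{F : Finset (Opens X) | F ⊆ {⟨U, hU⟩}},
              fun F F' hle hF => hle.trans hF⟩ : LowerSet (Finset (Opens X))))
          (flaggDist X x y) → y ∈ U := by
  constructor
  · intro x ε _
    rw [isOpen_iff_forall_mem_open]
    intro y hy
    obtain ⟨F, hFd, hF⟩ := (wellAbove_omegaD_iff ε (flaggDist X x y)).1 hy
    refine ⟨⋂ U ∈ F, ⋂ (_ : x ∈ U), (U : Set X), ?_, ?_, ?_⟩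
    · intro y' hy'
      refine (wellAbove_omegaD_iff ε (flaggDist X x y')).2 ⟨F, ?_, hF⟩
      rw [mem_flaggDist]
      intro U hU hx
      simp only [Set.mem_iInter] at hy'
      exact hy' U hU hx
    · refine isOpen_biInter_finset fun U hU => ?_
      by_cases hx : x ∈ U
      · simpa [hx] using U.isOpen
      · simp [hx]
    · simp only [Set.mem_iInter]
      exact fun U hU hx => (mem_flaggDist.1 hFd) U hU hx
  · intro U hU x hx y hw
    obtain ⟨F, hFd, hF⟩ := (wellAbove_omegaD_iff _ (flaggDist X x y)).1 hw
    have h1 : (⟨U, hU⟩ : Opens X) ∈ F := by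
      have := hF {⟨U, hU⟩} (by simp [LowerSet.mem_mk])
      exact this (Finset.mem_singleton_self _)
    exact (mem_flaggDist.1 hFd) _ h1 hx
end

section
/- If L is a value distributive lattice, then in the product lattice L × L the elements well above the bottom are exactly those of the form (⊤,a) or (b,⊤) with a ≻ 0 or b ≻ 0 respectively; consequently, if L has at least one element a with ⊤ > a ≻ 0, then L × L is not a value distributive lattice (the well-above-bottom elements do not form a filter). -/
lemma wA_snd {L : Type*} [CompleteLattice L] {p : L × L}
    (hp : wellAbove p ⊥) : wellAbove p.2 ⊥ := by
  intro S hS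
  rcases S.eq_empty_or_nonempty with rfl | ⟨s₀, hs₀⟩
  · simp only [sInf_empty] at hS
    obtain ⟨s, hs, -⟩ := hp (∅ : Set (L × L))
      (by simp only [sInf_empty]; exact ⟨hS.trans bot_le, hS.trans bot_le⟩)
    exact absurd hs (Set.notMem_empty s)
  · obtain ⟨s', ⟨s, hsS, rfl⟩, hle⟩ := hp ((fun s => ((⊥ : L), s)) '' S)
      (by
        constructor
        · exact (sInf_le (Set.mem_image_of_mem _ hs₀) : sInf _ ≤ ((⊥ : L), s₀)).1
        · rw [Prod.snd_sInf]
          refine le_trans (le_of_eq (congrArg sInf ?_)) hS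
          ext x; simp)
    exact ⟨s, hsS, hle.2⟩

lemma wA_fst {L : Type*} [CompleteLattice L] {p : L × L}
    (hp : wellAbove p ⊥) : wellAbove p.1 ⊥ := by
  intro S hS
  rcases S.eq_empty_or_nonempty with rfl | ⟨s₀, hs₀⟩
  · simp only [sInf_empty] at hS
    obtain ⟨s, hs, -⟩ := hp (∅ : Set (L × L))
      (by simp only [sInf_empty]; exact ⟨hS.trans bot_le, hS.trans bot_le⟩)
    exact absurd hs (Set.notMem_empty s)
  · obtain ⟨s', ⟨s, hsS, rfl⟩, hle⟩ := hp ((fun s => (s, (⊥ : L))) '' S)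
      (by
        constructor
        · rw [Prod.fst_sInf]
          refine le_trans (le_of_eq (congrArg sInf ?_)) hS
          ext x; simp
        · exact (sInf_le (show (s₀, (⊥ : L)) ∈ (fun s => (s, (⊥ : L))) '' S from ⟨s₀, hs₀, rfl⟩) : sInf _ ≤ (s₀, (⊥ : L))).2)
    exact ⟨s, hsS, hle.1⟩

lemma wA_top_or {L : Type*} [CompleteLattice L] {p : L × L}
    (hp : wellAbove p ⊥) : p.1 = ⊤ ∨ p.2 = ⊤ := by
  obtain ⟨s, hs, hle⟩ := hp {((⊤ : L), (⊥ : L)), ((⊥ : L), (⊤ : L))}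
    (by
      rw [sInf_pair]
      refine le_of_eq ?_
      apply Prod.ext <;> simp [Prod.fst_bot, Prod.snd_bot])
  rcases hs with rfl | rfl
  · exact Or.inl (top_le_iff.mp hle.1)
  · exact Or.inr (top_le_iff.mp hle.2)

lemma wA_of_left {L : Type*} [CompleteLattice L] {p : L × L}
    (h1 : p.1 = ⊤) (h2 : wellAbove p.2 ⊥) : wellAbove p ⊥ := by
  intro S hS
  have : sInf (Prod.snd '' S) ≤ ⊥ := by rw [← Prod.snd_sInf]; exact hS.2
  obtain ⟨t, ⟨s, hsS, rfl⟩, hle⟩ := h2 _ this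
  exact ⟨s, hsS, ⟨h1 ▸ le_top, hle⟩⟩

lemma wA_of_right {L : Type*} [CompleteLattice L] {p : L × L}
    (h1 : p.2 = ⊤) (h2 : wellAbove p.1 ⊥) : wellAbove p ⊥ := by
  intro S hS
  have : sInf (Prod.fst '' S) ≤ ⊥ := by rw [← Prod.fst_sInf]; exact hS.1
  obtain ⟨t, ⟨s, hsS, rfl⟩, hle⟩ := h2 _ this
  exact ⟨s, hsS, ⟨hle, h1 ▸ le_top⟩⟩

/-- in `L × L`, the elements well above the bottom are exactly
those of the form `(⊤,a)` or `(b,⊤)` with `a ≻ 0` resp. `b ≻ 0`; hence if `L`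
has an element `a` with `⊤ > a ≻ 0`, the well-above-bottom elements of `L × L`
are not closed under meets, so `L × L` is not a value distributive lattice. -/
theorem prod_not_value_distributive {L : Type*} [CompletelyDistribLattice L]
    (hne : ∃ a : L, wellAbove a ⊥)
    (hmeet : ∀ a b : L, wellAbove a ⊥ → wellAbove b ⊥ → wellAbove (a ⊓ b) ⊥) :
    (∀ p : L × L, wellAbove p ⊥ ↔
      ((p.1 = ⊤ ∧ wellAbove p.2 ⊥) ∨ (p.2 = ⊤ ∧ wellAbove p.1 ⊥))) ∧
    ((∃ a : L, a < ⊤ ∧ wellAbove a ⊥) →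
      ¬ ∀ p q : L × L, wellAbove p ⊥ → wellAbove q ⊥ → wellAbove (p ⊓ q) ⊥) := by
  constructor
  · intro p
    constructor
    · intro hp
      rcases wA_top_or hp with h | h
      · exact Or.inl ⟨h, wA_snd hp⟩
      · exact Or.inr ⟨h, wA_fst hp⟩
    · rintro (⟨h1, h2⟩ | ⟨h1, h2⟩)
      · exact wA_of_left h1 h2
      · exact wA_of_right h1 h2
  · rintro ⟨a, ha, hwa⟩ hall
    have h1 : wellAbove (((⊤ : L), a)) ⊥ := wA_of_left rfl hwa
    have h2 : wellAbove ((a, (⊤ : L))) ⊥ := wA_of_right rfl hwa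
    have h3 := hall _ _ h1 h2
    have : ((⊤ : L), a) ⊓ (a, (⊤ : L)) = (a, a) := by
      simp [Prod.ext_iff]
    rw [this] at h3
    rcases wA_top_or h3 with h | h <;> exact absurd h ha.ne
end
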